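/- Let p = 1, q = 0 (TASEP), n ≥ 0 and α > 0. There exists s₀ ≥ α such that for every real s > s₀ the operator I − α L_n^0(s) is boundedly invertible on ℓ¹(X_n^+) and (I − α L_n^0(s))^{−1} = I + α L_n^0(s − α). -/

import Mathlib

open MeasureTheory Set
open scoped Classical
noncomputable section

/-- Configurations of `n` particles on `ℤ⁺`: strictly increasing `n`-tuples of naturals
(`X_0` is a singleton). -/
def Conf (n : ℕ) : Type := {x : Fin n → ℕ // StrictMono x}

instance (n : ℕ) : DecidableEq (Conf n) := by unfold Conf; infer_instance

/-- `E_n = ℓ¹(X_n)`. -/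
abbrev En (n : ℕ) : Type := lp (fun _ : Conf n => ℝ) 1

/-- Real-valued indicator of a proposition. -/
def ind (P : Prop) : ℝ := if P then 1 else 0

/-- Extension of a function on configurations to all tuples, by zero. -/
def extFun {n : ℕ} (u : Conf n → ℝ) (y : Fin n → ℕ) : ℝ :=
  if h : StrictMono y then u ⟨y, h⟩ else 0

/-- The tuple `x^{i,+}`. -/
def up {n : ℕ} (x : Fin n → ℕ) (i : Fin n) : Fin n → ℕ := Function.update x i (x i + 1)

/-- The tuple `x^{i,-}`. -/
def down {n : ℕ} (x : Fin n → ℕ) (i : Fin n) : Fin n → ℕ := Function.update x i (x i - 1)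

/-- `x^{i,+} ∈ X_n`. -/
def upOK {n : ℕ} (x : Fin n → ℕ) (i : Fin n) : Prop := StrictMono (up x i)

/-- `x^{i,-} ∈ X_n`: the particle at site `x i` can move left to a nonnegative site. -/
def downOK {n : ℕ} (x : Fin n → ℕ) (i : Fin n) : Prop := 0 < x i ∧ StrictMono (down x i)

/-- The action of the `n`-particle ASEP generator on `ℤ⁺`. -/
def Qact (p q : ℝ) {n : ℕ} (u : Conf n → ℝ) (x : Conf n) : ℝ :=
  ∑ i : Fin n,
    (p * ind (downOK x.1 i) * extFun u (down x.1 i)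
     + q * ind (upOK x.1 i) * extFun u (up x.1 i)
     - p * ind (upOK x.1 i) * u x
     - q * ind (downOK x.1 i) * u x)

/-- The action of `δ` (multiplication by the indicator of `x₁ = 0`; zero on `E₀`). -/
def Dact {n : ℕ} (u : Conf n → ℝ) (x : Conf n) : ℝ :=
  ind (∃ h : 0 < n, x.1 ⟨0, h⟩ = 0) * u x

/-- Tail of a configuration. -/
def confTail {n : ℕ} (x : Conf (n+1)) : Conf n :=
  ⟨fun i => x.1 i.succ, fun _ _ h => x.2 (Fin.succ_lt_succ_iff.mpr h)⟩

/-- The action of `A_{n+1} : E_n → E_{n+1}`, `(A F)(x₁,…,x_{n+1}) = 1{x₁=0}·F(x₂,…,x_{n+1})`. -/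
def Aact {n : ℕ} (F : Conf n → ℝ) (x : Conf (n+1)) : ℝ :=
  ind (x.1 0 = 0) * F (confTail x)

/-- The action of `B_n : E_{n+1} → E_n`, `(B F)(x₁,…,x_n) = 1{x₁>0}·F(0,x₁,…,x_n)`
(for `n = 0`, `B₀ F = F(0)`). -/
def Bact {n : ℕ} (F : Conf (n+1) → ℝ) (x : Conf n) : ℝ :=
  ind (¬ ∃ h : 0 < n, x.1 ⟨0, h⟩ = 0) * extFun F (Fin.cons 0 x.1)

/-- Laplace transform `L(s) = ∫_0^∞ e^{-st} e^{tQ} dt` of the semigroup generated by `Q`. -/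
def Lop {X : Type} [NormedAddCommGroup X] [NormedSpace ℝ X] [CompleteSpace X]
    (Q : X →L[ℝ] X) (s : ℝ) : X →L[ℝ] X :=
  ∫ t in Ioi (0:ℝ), Real.exp (-(s*t)) • NormedSpace.exp (t • Q)

/-- The Bochner integral defining `L(s)` converges. -/
def LapConv {X : Type} [NormedAddCommGroup X] [NormedSpace ℝ X] [CompleteSpace X]
    (Q : X →L[ℝ] X) (s : ℝ) : Prop :=
  IntegrableOn (fun t => Real.exp (-(s*t)) • NormedSpace.exp (t • Q)) (Ioi (0:ℝ))


/-- Configurations with `x₁ > 0` (all of `X_0` when `n = 0`). -/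
def ConfP (n : ℕ) : Type := {x : Conf n // ∀ h : 0 < n, 0 < x.1 ⟨0, h⟩}

instance (n : ℕ) : DecidableEq (ConfP n) := by unfold ConfP Conf; infer_instance

/-- The configuration `(0, x)` for `x ∈ X_n⁺`. -/
def cons0 {n : ℕ} (x : ConfP n) : Conf (n+1) :=
  ⟨Fin.cons 0 x.1.1, by
    intro i j hij
    induction j using Fin.cases with
    | zero => exact absurd hij (Fin.not_lt_zero _).elim
    | succ j' =>
      induction i using Fin.cases with
      | zero =>
        simp only [Fin.cons_zero, Fin.cons_succ]
        exact lt_of_lt_of_le (x.2 j'.pos)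
          (x.1.2.monotone (by simp [Fin.le_def]))
      | succ i' =>
        simp only [Fin.cons_succ]
        exact x.1.2 (by exact_mod_cast Fin.succ_lt_succ_iff.mp hij)⟩

/-- `ℓ¹(X_n⁺)`. -/
abbrev Ep (n : ℕ) : Type := lp (fun _ : ConfP n => ℝ) 1

/-!
For `s > ‖Q‖` the Laplace transform `L(s) = ∫₀^∞ e^{-st} e^{tQ} dt` equals the Neumann series
`∑ₖ s^{-(k+1)} Qᵏ`, i.e. the resolvent `(s - Q)⁻¹`, so it satisfies the resolvent identity
`L(s) - L(s') = (s' - s) L(s) L(s')`.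

In TASEP no particle ever jumps onto site `0`, so the value of `Q u` on `{x₁ = 0}` only depends on
`u` on `{x₁ = 0}`: `Q`, hence each `L(s)`, maps the kernel of the restriction `P` to `{x₁ = 0}`
into itself. For an operator `S` with this property and any `T`, `P S T J = (P S J)(P T J)`, where
`J` extends by zero. Thus `Lₙ⁰(s) = P L_{n+1}(s) J` inherits the resolvent identity, which for
`s' = s - α` is exactly `(I - α Lₙ⁰(s))(I + α Lₙ⁰(s - α)) = I = (I + α Lₙ⁰(s - α))(I - α Lₙ⁰(s))`.
-/

open scoped Nat

theorem sub_eq_mul_sub_mul {R : Type*} [Ring R] {a b x y : R} (hx : x * a = 1) (hy : b * y = 1) :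
    x - y = x * (b - a) * y := by
  rw [mul_sub, sub_mul, hx, one_mul, mul_assoc, hy, mul_one]

theorem one_sub_smul_mul_one_add_smul {R A : Type*} [CommRing R] [Ring A] [Algebra R A]
    {M N : A} {α : R} (h : M - N = -α • (M * N)) : (1 - α • M) * (1 + α • N) = 1 := by
  have h' : α • N - α • M = (α * α) • (M * N) := by
    rw [← neg_sub, ← smul_sub, h, smul_smul, mul_neg, neg_smul, neg_neg]
  rw [sub_mul, mul_add, mul_add, one_mul, one_mul, mul_one, smul_mul_smul, ← h']
  abel

theorem one_add_smul_mul_one_sub_smul {R A : Type*} [CommRing R] [Ring A] [Algebra R A]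
    {M N : A} {α : R} (h : N - M = α • (N * M)) : (1 + α • N) * (1 - α • M) = 1 := by
  have := one_sub_smul_mul_one_add_smul (α := -α) (by rwa [neg_neg])
  rwa [neg_smul, neg_smul, sub_neg_eq_add, ← sub_eq_add_neg] at this

theorem norm_inv_smul_lt_one {E : Type*} [SeminormedAddCommGroup E] [NormedSpace ℝ E]
    {Q : E} {s : ℝ} (hs : ‖Q‖ < s) : ‖s⁻¹ • Q‖ < 1 := by
  have hs0 : 0 < s := (norm_nonneg Q).trans_lt hs
  rwa [norm_smul, norm_inv, Real.norm_of_nonneg hs0.le, inv_mul_lt_one₀ hs0]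

section Laplace

variable {X : Type} [NormedAddCommGroup X] [NormedSpace ℝ X]

theorem ContinuousLinearMap.norm_pow_le_pow_norm (Q : X →L[ℝ] X) (k : ℕ) : ‖Q ^ k‖ ≤ ‖Q‖ ^ k := by
  rcases k.eq_zero_or_pos with rfl | hk
  · simpa [ContinuousLinearMap.one_def] using ContinuousLinearMap.norm_id_le
  · exact norm_pow_le' Q hk

variable [CompleteSpace X]

theorem ContinuousLinearMap.norm_exp_le (A : X →L[ℝ] X) :
    ‖NormedSpace.exp A‖ ≤ Real.exp ‖A‖ := by
  refine (NormedSpace.exp_series_hasSum_exp' (𝕂 := ℝ) A).norm_le_of_bounded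
    (by simpa [Real.exp_eq_exp_ℝ] using NormedSpace.expSeries_div_hasSum_exp ‖A‖) fun k => ?_
  rw [norm_smul, norm_inv, Real.norm_natCast, inv_mul_eq_div]
  gcongr
  exact A.norm_pow_le_pow_norm k

theorem integrableOn_exp_neg_mul_mul_pow {s : ℝ} (hs : 0 < s) (k : ℕ) :
    IntegrableOn (fun t => Real.exp (-(s * t)) * ((k ! : ℝ)⁻¹ * t ^ k)) (Ioi 0) := by
  have h := (integrableOn_rpow_mul_exp_neg_mul_rpow (s := k) (p := 1) (b := s)
    (by linarith [(k.cast_nonneg : (0 : ℝ) ≤ k)]) zero_lt_one hs).const_mul (k ! : ℝ)⁻¹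
  refine IntegrableOn.congr_fun h (fun t _ => ?_) measurableSet_Ioi
  simp only [Real.rpow_one, Real.rpow_natCast, neg_mul]
  ring

theorem integral_exp_neg_mul_mul_pow {s : ℝ} (hs : 0 < s) (k : ℕ) :
    ∫ t in Ioi 0, Real.exp (-(s * t)) * ((k ! : ℝ)⁻¹ * t ^ k) = (s⁻¹) ^ (k + 1) := by
  have hGamma := Real.integral_rpow_mul_exp_neg_mul_Ioi (a := k + 1) (by positivity) hs
  rw [add_sub_cancel_right, Real.Gamma_nat_eq_factorial] at hGamma
  simp_rw [Real.rpow_natCast] at hGamma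
  rw [show (k : ℝ) + 1 = ((k + 1 : ℕ) : ℝ) by push_cast; ring, Real.rpow_natCast, one_div] at hGamma
  calc ∫ t in Ioi 0, Real.exp (-(s * t)) * ((k ! : ℝ)⁻¹ * t ^ k)
      = (k ! : ℝ)⁻¹ * ∫ t in Ioi 0, t ^ k * Real.exp (-(s * t)) := by
        rw [← integral_const_mul]; congr 1; funext t; ring
    _ = (s⁻¹) ^ (k + 1) := by rw [hGamma]; field_simp

theorem hasSum_Lop (Q : X →L[ℝ] X) {s : ℝ} (hs : ‖Q‖ < s) :
    HasSum (fun k : ℕ => (s⁻¹) ^ (k + 1) • Q ^ k) (Lop Q s) := by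
  have hs0 : 0 < s := (norm_nonneg Q).trans_lt hs
  set F : ℕ → ℝ → X →L[ℝ] X := fun k t => (Real.exp (-(s * t)) * ((k ! : ℝ)⁻¹ * t ^ k)) • Q ^ k
  have hF_int (k : ℕ) : IntegrableOn (F k) (Ioi 0) :=
    (integrableOn_exp_neg_mul_mul_pow hs0 k).smul_const _
  have hF_norm (k : ℕ) : ∫ t in Ioi 0, ‖F k t‖ = (s⁻¹) ^ (k + 1) * ‖Q ^ k‖ := by
    rw [← integral_exp_neg_mul_mul_pow hs0 k, ← integral_mul_const]
    refine setIntegral_congr_fun measurableSet_Ioi fun t (ht : 0 < t) => ?_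
    rw [norm_smul, Real.norm_of_nonneg (by positivity)]
  have hF_sum : Summable fun k => ∫ t in Ioi 0, ‖F k t‖ := by
    simp_rw [hF_norm]
    have hgeom : Summable fun k : ℕ => s⁻¹ * (s⁻¹ * ‖Q‖) ^ k :=
      (summable_geometric_of_lt_one (by positivity) (by rwa [inv_mul_lt_one₀ hs0])).mul_left _
    refine hgeom.of_nonneg_of_le (fun k => by positivity) fun k => ?_
    rw [mul_pow, ← mul_assoc, ← pow_succ']
    gcongr
    exact Q.norm_pow_le_pow_norm k
  have hF_pt (t : ℝ) : ∑' k, F k t = Real.exp (-(s * t)) • NormedSpace.exp (t • Q) := by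
    rw [← ((NormedSpace.exp_series_hasSum_exp' (𝕂 := ℝ) (t • Q)).const_smul _).tsum_eq]
    congr 1; funext k
    simp only [F, smul_pow, smul_smul, mul_comm]
  have hF_integral (k : ℕ) : ∫ t in Ioi 0, F k t = (s⁻¹) ^ (k + 1) • Q ^ k := by
    rw [integral_smul_const, integral_exp_neg_mul_mul_pow hs0 k]
  simpa only [hF_integral, hF_pt, Lop] using hasSum_integral_of_summable_integral_norm hF_int hF_sum

theorem lapConv_of_norm_lt (Q : X →L[ℝ] X) {s : ℝ} (hs : ‖Q‖ < s) : LapConv Q s := by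
  have hexp : Continuous (NormedSpace.exp : (X →L[ℝ] X) → X →L[ℝ] X) :=
    continuous_iff_continuousAt.2 fun A => (NormedSpace.exp_analytic (𝕂 := ℝ) A).continuousAt
  have hcont : Continuous fun t : ℝ => Real.exp (-(s * t)) • NormedSpace.exp (t • Q) := by
    fun_prop
  refine (exp_neg_integrableOn_Ioi 0 (sub_pos.2 hs)).mono' hcont.aestronglyMeasurable ?_
  filter_upwards [ae_restrict_mem measurableSet_Ioi] with t (ht : 0 < t)
  calc ‖Real.exp (-(s * t)) • NormedSpace.exp (t • Q)‖
      ≤ Real.exp (-(s * t)) * Real.exp ‖t • Q‖ := by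
        rw [norm_smul, Real.norm_of_nonneg (Real.exp_nonneg _)]
        gcongr
        exact (t • Q).norm_exp_le
    _ = Real.exp (-(s - ‖Q‖) * t) := by
        rw [norm_smul, Real.norm_of_nonneg ht.le, ← Real.exp_add]
        ring_nf

theorem Lop_eq_inv_smul_tsum_pow (Q : X →L[ℝ] X) {s : ℝ} (hs : ‖Q‖ < s) :
    Lop Q s = s⁻¹ • ∑' k : ℕ, (s⁻¹ • Q) ^ k := by
  refine (hasSum_Lop Q hs).unique ?_
  simpa only [smul_pow, smul_smul, ← pow_succ'] using
    (summable_geometric_of_norm_lt_one (norm_inv_smul_lt_one hs)).hasSum.const_smul s⁻¹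

theorem sub_mul_Lop (Q : X →L[ℝ] X) {s : ℝ} (hs : ‖Q‖ < s) : (s • 1 - Q) * Lop Q s = 1 := by
  have hs0 : 0 < s := (norm_nonneg Q).trans_lt hs
  rw [Lop_eq_inv_smul_tsum_pow Q hs, ← smul_inv_smul₀ hs0.ne' Q, ← smul_sub, smul_mul_smul,
    mul_inv_cancel₀ hs0.ne', one_smul, inv_smul_smul₀ hs0.ne',
    mul_neg_geom_series _ (norm_inv_smul_lt_one hs)]

theorem Lop_mul_sub (Q : X →L[ℝ] X) {s : ℝ} (hs : ‖Q‖ < s) : Lop Q s * (s • 1 - Q) = 1 := by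
  have hs0 : 0 < s := (norm_nonneg Q).trans_lt hs
  rw [Lop_eq_inv_smul_tsum_pow Q hs, ← smul_inv_smul₀ hs0.ne' Q, ← smul_sub, smul_mul_smul,
    inv_mul_cancel₀ hs0.ne', one_smul, inv_smul_smul₀ hs0.ne',
    geom_series_mul_neg _ (norm_inv_smul_lt_one hs)]

theorem Lop_sub_Lop (Q : X →L[ℝ] X) {s s' : ℝ} (hs : ‖Q‖ < s) (hs' : ‖Q‖ < s') :
    Lop Q s - Lop Q s' = (s' - s) • (Lop Q s * Lop Q s') := by
  rw [sub_eq_mul_sub_mul (Lop_mul_sub Q hs) (sub_mul_Lop Q hs'), sub_sub_sub_cancel_right,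
    ← sub_smul, mul_smul_comm, mul_one, smul_mul_assoc]

theorem mapsTo_Lop {K : Submodule ℝ X} (hK : IsClosed (K : Set X)) {Q : X →L[ℝ] X}
    (hQ : MapsTo Q K K) {s : ℝ} (hs : ‖Q‖ < s) : MapsTo (Lop Q s) K K := by
  intro v hv
  have hterm (k : ℕ) : ((s⁻¹) ^ (k + 1) • Q ^ k) v ∈ K := by
    rw [smul_apply, FunLike.coe_pow_eq_iterate]
    exact K.smul_mem _ (hQ.iterate k hv)
  exact hK.mem_of_tendsto ((hasSum_Lop Q hs).mapL (ContinuousLinearMap.apply ℝ X v)).tendsto_sum_nat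
    (Filter.Eventually.of_forall fun N => K.sum_mem fun k _ => hterm k)

end Laplace

section Compression

variable {𝕜 E F : Type*} [NontriviallyNormedField 𝕜] [NormedAddCommGroup E] [NormedSpace 𝕜 E]
  [NormedAddCommGroup F] [NormedSpace 𝕜 F]

theorem comp_mul_comp_of_mapsTo_ker {P : E →L[𝕜] F} {J : F →L[𝕜] E} (hPJ : ∀ u, P (J u) = u)
    {S : E →L[𝕜] E} (hS : MapsTo S (P.ker : Set E) P.ker) (T : E →L[𝕜] E) :
    P ∘L (S * T) ∘L J = (P ∘L S ∘L J) * (P ∘L T ∘L J) := by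
  ext u
  set v := T (J u)
  have hv : v - J (P v) ∈ P.ker := by simp [hPJ]
  simpa [sub_eq_zero] using hS hv

end Compression

theorem compress_Lop_sub_compress_Lop {X F : Type} [NormedAddCommGroup X] [NormedSpace ℝ X]
    [CompleteSpace X] [NormedAddCommGroup F] [NormedSpace ℝ F] {P : X →L[ℝ] F} {J : F →L[ℝ] X}
    (hPJ : ∀ u, P (J u) = u) {Q : X →L[ℝ] X} (hQ : MapsTo Q (P.ker : Set X) P.ker) {s s' : ℝ}
    (hs : ‖Q‖ < s) (hs' : ‖Q‖ < s') :
    P ∘L Lop Q s ∘L J - P ∘L Lop Q s' ∘L J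
      = (s' - s) • ((P ∘L Lop Q s ∘L J) * (P ∘L Lop Q s' ∘L J)) := by
  rw [← comp_mul_comp_of_mapsTo_ker hPJ (mapsTo_Lop P.isClosed_ker hQ hs),
    ← ContinuousLinearMap.comp_sub, ← ContinuousLinearMap.sub_comp, Lop_sub_Lop Q hs hs',
    ContinuousLinearMap.smul_comp, ContinuousLinearMap.comp_smul]

section RestrictExtend

variable {ι κ : Type*} {e : ι → κ}

theorem memℓp_one_iff {f : ι → ℝ} : Memℓp f 1 ↔ Summable fun i => ‖f i‖ := by
  simp [memℓp_gen_iff (p := 1) (by norm_num)]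

theorem lp.norm_one_eq_tsum (f : lp (fun _ : ι => ℝ) 1) : ‖f‖ = ∑' i, ‖f i‖ := by
  simp [lp.norm_eq_tsum_rpow (p := 1) (by norm_num)]

theorem norm_extend_zero (he : Function.Injective e) (u : ι → ℝ) :
    (fun k => ‖Function.extend e u 0 k‖) = Function.extend e (fun i => ‖u i‖) 0 := by
  funext k
  by_cases hk : ∃ i, e i = k
  · obtain ⟨i, rfl⟩ := hk
    simp [he.extend_apply]
  · simp [Function.extend_apply' _ _ _ hk]

namespace lp

def restrictCLM (he : Function.Injective e) :
    lp (fun _ : κ => ℝ) 1 →L[ℝ] lp (fun _ : ι => ℝ) 1 :=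
  LinearMap.mkContinuous
    { toFun v := ⟨v ∘ e, memℓp_one_iff.2 ((memℓp_one_iff.1 v.2).comp_injective he)⟩
      map_add' _ _ := rfl
      map_smul' _ _ := rfl }
    1 fun v => by
      rw [one_mul, norm_one_eq_tsum, norm_one_eq_tsum]
      exact tsum_comp_le_tsum_of_inj (memℓp_one_iff.1 v.2) (fun _ => norm_nonneg _) he

@[simp]
theorem restrictCLM_apply (he : Function.Injective e) (v : lp (fun _ : κ => ℝ) 1) (i : ι) :
    restrictCLM he v i = v (e i) := rfl

def extendByZeroCLM (he : Function.Injective e) :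
    lp (fun _ : ι => ℝ) 1 →L[ℝ] lp (fun _ : κ => ℝ) 1 :=
  LinearMap.mkContinuous
    { toFun u := ⟨Function.extend e u 0, memℓp_one_iff.2 <| by
        rw [norm_extend_zero he]
        exact (summable_extend_zero he).2 (memℓp_one_iff.1 u.2)⟩
      map_add' u v := Subtype.ext ((Function.ExtendByZero.linearMap ℝ e).map_add u v)
      map_smul' c u := Subtype.ext ((Function.ExtendByZero.linearMap ℝ e).map_smul c u) }
    1 fun u => by
      rw [one_mul, norm_one_eq_tsum, norm_one_eq_tsum]
      exact ((congrArg tsum (norm_extend_zero he u)).trans (tsum_extend_zero he _)).le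

@[simp]
theorem extendByZeroCLM_apply (he : Function.Injective e) (u : lp (fun _ : ι => ℝ) 1) (k : κ) :
    extendByZeroCLM he u k = Function.extend e u 0 k := rfl

@[simp]
theorem restrictCLM_extendByZeroCLM (he : Function.Injective e) (u : lp (fun _ : ι => ℝ) 1) :
    restrictCLM he (extendByZeroCLM he u) = u := by
  refine lp.ext (funext fun i => ?_)
  simp [he.extend_apply]

theorem extendByZeroCLM_single [DecidableEq ι] [DecidableEq κ] (he : Function.Injective e)
    (i : ι) (a : ℝ) :
    extendByZeroCLM he (lp.single 1 i a) = lp.single 1 (e i) a := by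
  refine lp.ext (funext fun k => ?_)
  by_cases hk : ∃ j, e j = k
  · obtain ⟨j, rfl⟩ := hk
    simp [he.extend_apply, Pi.single_apply, he.eq_iff]
  · have hki : k ≠ e i := fun h => hk ⟨i, h.symm⟩
    simp [Function.extend_apply' _ _ _ hk, hki]

end lp

end RestrictExtend

section TASEP

variable {n : ℕ}

theorem cons0_injective : Function.Injective (cons0 (n := n)) := by
  intro x y h
  refine Subtype.ext (Subtype.ext (funext fun i => ?_))
  simpa [cons0] using congrArg (fun z : Conf (n + 1) => z.1 i.succ) h

theorem exists_cons0_eq {z : Conf (n + 1)} (hz : z.1 0 = 0) : ∃ x : ConfP n, cons0 x = z := by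
  refine ⟨⟨confTail z, fun h => ?_⟩, Subtype.ext (funext fun i => ?_)⟩
  · simpa [confTail, hz] using z.2 (Fin.succ_pos ⟨0, h⟩)
  · cases i using Fin.cases with
    | zero => exact hz.symm
    | succ j => rfl

theorem Qact_one_zero_cons0_eq_zero {u : Conf (n + 1) → ℝ} (hu : ∀ x : ConfP n, u (cons0 x) = 0)
    (x : ConfP n) : Qact 1 0 u (cons0 x) = 0 := by
  refine Finset.sum_eq_zero fun i _ => ?_
  suffices ind (downOK (cons0 x).1 i) * extFun u (down (cons0 x).1 i) = 0 by simpa [hu x] using this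
  cases i using Fin.cases with
  | zero => simp [ind, downOK, cons0]
  | succ j =>
    rw [extFun]
    split_ifs with hmono
    · obtain ⟨y, hy⟩ := exists_cons0_eq (z := ⟨_, hmono⟩)
        (Function.update_of_ne (Fin.succ_ne_zero j).symm (x.1.1 j - 1) _)
      rw [← hy, hu y, mul_zero]
    · rw [mul_zero]

variable (n) in
abbrev restrictCons0 : En (n + 1) →L[ℝ] Ep n := lp.restrictCLM cons0_injective

variable (n) in
abbrev extendCons0 : Ep n →L[ℝ] En (n + 1) := lp.extendByZeroCLM cons0_injective

theorem mapsTo_ker_restrictCons0 {Q : En (n + 1) →L[ℝ] En (n + 1)}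
    (hQ : ∀ (u : En (n + 1)) (x : Conf (n + 1)), Q u x = Qact 1 0 (fun z => u z) x) :
    MapsTo Q ((restrictCons0 n).ker : Set (En (n + 1))) (restrictCons0 n).ker := by
  intro v hv
  simp only [SetLike.mem_coe, LinearMap.mem_ker, ContinuousLinearMap.coe_coe] at hv ⊢
  refine lp.ext (funext fun x => ?_)
  rw [lp.restrictCLM_apply, hQ]
  exact Qact_one_zero_cons0_eq_zero (fun y => by simpa using congrArg (· y) hv) x

theorem restrictCons0_comp_comp_extendCons0_single (S : En (n + 1) →L[ℝ] En (n + 1))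
    (y x : ConfP n) :
    (restrictCons0 n ∘L S ∘L extendCons0 n) (lp.single 1 y 1) x
      = S (lp.single 1 (cons0 y) 1) (cons0 x) := by
  simp [lp.extendByZeroCLM_single]

end TASEP

theorem tasep_remark1_2_general (n : ℕ) (α : ℝ)
    (Q : En (n+1) →L[ℝ] En (n+1))
    (hQ : ∀ (u : En (n+1)) (x : Conf (n+1)), Q u x = Qact 1 0 (fun z => u z) x) :
    ∃ s₀ : ℝ, α ≤ s₀ ∧ ∀ s : ℝ, s₀ < s →
      -- the Bochner integrals defining L_{n+1}(s) and L_{n+1}(s-α) converge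
      LapConv Q s ∧ LapConv Q (s - α) ∧
      -- the operators Lₙ⁰(s) and Lₙ⁰(s-α) on ℓ¹(Xₙ⁺)
      ∃ (L0s L0sα : Ep n →L[ℝ] Ep n),
        (∀ (y x : ConfP n),
          L0s (lp.single 1 y (1:ℝ)) x = Lop Q s (lp.single 1 (cons0 y) (1:ℝ)) (cons0 x)) ∧
        (∀ (y x : ConfP n),
          L0sα (lp.single 1 y (1:ℝ)) x
            = Lop Q (s - α) (lp.single 1 (cons0 y) (1:ℝ)) (cons0 x)) ∧
        -- I - α Lₙ⁰(s) is boundedly invertible with inverse I + α Lₙ⁰(s-α)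
        (1 - α • L0s) * (1 + α • L0sα) = 1 ∧ (1 + α • L0sα) * (1 - α • L0s) = 1 := by
  have hPJ : ∀ u, restrictCons0 n (extendCons0 n u) = u := lp.restrictCLM_extendByZeroCLM _
  have hker := mapsTo_ker_restrictCons0 hQ
  refine ⟨‖Q‖ + |α|, by linarith [le_abs_self α, norm_nonneg Q], fun s hs => ?_⟩
  have hs₁ : ‖Q‖ < s := by linarith [abs_nonneg α]
  have hs₂ : ‖Q‖ < s - α := by linarith [le_abs_self α]
  have hres := compress_Lop_sub_compress_Lop hPJ hker hs₁ hs₂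
  have hres' := compress_Lop_sub_compress_Lop hPJ hker hs₂ hs₁
  rw [sub_sub_cancel_left] at hres
  rw [sub_sub_cancel] at hres'
  exact ⟨lapConv_of_norm_lt Q hs₁, lapConv_of_norm_lt Q hs₂, _, _,
    restrictCons0_comp_comp_extendCons0_single _, restrictCons0_comp_comp_extendCons0_single _,
    one_sub_smul_mul_one_add_smul hres, one_add_smul_mul_one_sub_smul hres'⟩

/-- **Remark 1.2** of Tracy–Widom.  In TASEP (`p = 1`, `q = 0`), for `α > 0` there is
`s₀ ≥ α` such that for all `s > s₀` the operator `I - α Lₙ⁰(s)` is boundedly invertible on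
`ℓ¹(Xₙ⁺)` with `(I - α Lₙ⁰(s))⁻¹ = I + α Lₙ⁰(s - α)`, where `Lₙ⁰(s)` has kernel
`φ̂_{n+1}((0,x),(0,y);s)`. -/
theorem tasep_remark1_2 (n : ℕ) (α : ℝ) (hα : 0 < α)
    (Q : En (n+1) →L[ℝ] En (n+1))
    (hQ : ∀ (u : En (n+1)) (x : Conf (n+1)), Q u x = Qact 1 0 (fun z => u z) x) :
    ∃ s₀ : ℝ, α ≤ s₀ ∧ ∀ s : ℝ, s₀ < s →
      -- the Bochner integrals defining L_{n+1}(s) and L_{n+1}(s-α) converge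
      LapConv Q s ∧ LapConv Q (s - α) ∧
      -- the operators Lₙ⁰(s) and Lₙ⁰(s-α) on ℓ¹(Xₙ⁺)
      ∃ (L0s L0sα : Ep n →L[ℝ] Ep n),
        (∀ (y x : ConfP n),
          L0s (lp.single 1 y (1:ℝ)) x = Lop Q s (lp.single 1 (cons0 y) (1:ℝ)) (cons0 x)) ∧
        (∀ (y x : ConfP n),
          L0sα (lp.single 1 y (1:ℝ)) x
            = Lop Q (s - α) (lp.single 1 (cons0 y) (1:ℝ)) (cons0 x)) ∧
        -- I - α Lₙ⁰(s) is boundedly invertible with inverse I + α Lₙ⁰(s-α)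
        (1 - α • L0s) * (1 + α • L0sα) = 1 ∧ (1 + α • L0sα) * (1 - α • L0s) = 1 :=
  tasep_remark1_2_general n α Q hQ
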